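/- Assume R = DV is obtained by the lazy reduction of the cone filtration boundary matrix. Let (σ,τ̄) be a persistence pair pairing a base simplex σ with a cone simplex τ̄ = ω∗τ, with min σ = d > b = max τ (low R[τ̄] = σ). Then every base simplex appearing with nonzero coefficient in column V[τ̄] lies in K_{≥b}, i.e., V[τ̄] ∩ K ⊆ K_{≥b}. -/

import Mathlib

open Finsupp
open scoped Classical

/-- A finite Δ-complex over a field `F`: each cell has a dimension, a boundary chain,
and an integer support interval `T(σ) = [tmin σ, tmax σ] ⊆ [0, n]`; whenever `σ` appears
in `∂τ` one has `tmin σ < tmin τ < tmax τ < tmax σ`. -/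
structure DeltaComplex (F : Type) [Field F] (n : ℤ) where
  Cell : Type
  deq : DecidableEq Cell
  fin : Fintype Cell
  dim : Cell → ℕ
  tmin : Cell → ℤ
  tmax : Cell → ℤ
  bdry : Cell → (Cell →₀ F)
  tmin_nonneg : ∀ σ, 0 ≤ tmin σ
  tmin_lt_tmax : ∀ σ, tmin σ < tmax σ
  tmax_le : ∀ σ, tmax σ ≤ n
  bdry_dim : ∀ τ σ, bdry τ σ ≠ 0 → dim σ + 1 = dim τ
  nest : ∀ τ σ, bdry τ σ ≠ 0 → tmin σ < tmin τ ∧ tmax τ < tmax σ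
  bdry_bdry : ∀ τ, ((bdry τ).sum fun σ a => a • bdry σ) = 0

attribute [instance] DeltaComplex.deq DeltaComplex.fin

variable {F : Type} [Field F] {n : ℤ}

/-- The boundary of a chain of `K`. -/
noncomputable def bd (K : DeltaComplex F n) (c : K.Cell →₀ F) : K.Cell →₀ F :=
  c.sum fun τ a => a • K.bdry τ

/-- A chain is supported on a set of cells. -/
def SuppOn {α β : Type} [Zero β] (c : α →₀ β) (S : α → Prop) : Prop :=
  ∀ x, c x ≠ 0 → S x

/-- Cells of the prism `K̂`: vertical cells `σ×{i}` and horizontal cells `σ×[i,i+1]`. -/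
inductive PCell (C : Type) where
  | vert : C → ℤ → PCell C
  | horiz : C → ℤ → PCell C
deriving DecidableEq

/-- Membership of a prism cell in the prism `K̂`. -/
def inPrism (K : DeltaComplex F n) : PCell K.Cell → Prop
  | .vert σ i => K.tmin σ ≤ i ∧ i ≤ K.tmax σ
  | .horiz σ i => K.tmin σ ≤ i ∧ i + 1 ≤ K.tmax σ

/-- Membership of a prism cell in the interlevel subcomplex `K̂_i^j` (cells `σ×T` with
`T ⊆ [i,j]`). -/
def inSub (K : DeltaComplex F n) (i j : ℤ) : PCell K.Cell → Prop
  | .vert σ t => (K.tmin σ ≤ t ∧ t ≤ K.tmax σ) ∧ i ≤ t ∧ t ≤ j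
  | .horiz σ t => (K.tmin σ ≤ t ∧ t + 1 ≤ K.tmax σ) ∧ i ≤ t ∧ t + 1 ≤ j

/-- The boundary of a single prism cell: `∂(τ×i) = (∂τ)×i` and
`∂(σ×[i,i+1]) = σ×(i+1) − σ×i − (∂σ)×[i,i+1]`. -/
noncomputable def pcellBd (K : DeltaComplex F n) : PCell K.Cell → (PCell K.Cell →₀ F)
  | .vert τ i => (K.bdry τ).sum fun σ a => Finsupp.single (PCell.vert σ i) a
  | .horiz σ i =>
      Finsupp.single (PCell.vert σ (i + 1)) 1 - Finsupp.single (PCell.vert σ i) 1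
        - (K.bdry σ).sum fun ρ a => Finsupp.single (PCell.horiz ρ i) a

/-- The boundary of a prism chain. -/
noncomputable def pbd (K : DeltaComplex F n) (c : PCell K.Cell →₀ F) : PCell K.Cell →₀ F :=
  c.sum fun x a => a • pcellBd K x

/-- `z` is a relative cycle of the pair of subcomplexes `(A, B)` of the prism. -/
def RelCycle (K : DeltaComplex F n) (A B : PCell K.Cell → Prop)
    (z : PCell K.Cell →₀ F) : Prop :=
  SuppOn z A ∧ SuppOn (pbd K z) B

/-- The homology class `[z] ∈ H(A,B)` lies in the image of the map
`H(A',B') → H(A,B)` induced by the inclusion of pairs `(A',B') ⊆ (A,B)`: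
there is a relative cycle `α` of `(A',B')` homologous to `z` within `(A,B)`. -/
def InImg (K : DeltaComplex F n) (A' B' A B : PCell K.Cell → Prop)
    (z : PCell K.Cell →₀ F) : Prop :=
  ∃ α β γ : PCell K.Cell →₀ F,
    RelCycle K A' B' α ∧ SuppOn β A ∧ SuppOn γ B ∧ z = α + pbd K β + γ

/-- The vertical prism chain `w × t`. -/
noncomputable def vchain (K : DeltaComplex F n) (w : K.Cell →₀ F) (t : ℤ) :
    PCell K.Cell →₀ F :=
  w.sum fun σ a => Finsupp.single (PCell.vert σ t) a

/-- A valid choice of times for Lift-Cycle: for every simplex `τ` of `z` with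
`T(τ) ∩ [b,d] ≠ ∅`, the chosen time satisfies `t τ ∈ T(τ) ∩ [b,d]`. -/
def ValidTimes (K : DeltaComplex F n) (z : K.Cell →₀ F) (b d : ℤ) (t : K.Cell → ℤ) : Prop :=
  ∀ τ, z τ ≠ 0 → K.tmin τ ≤ d → b ≤ K.tmax τ →
    K.tmin τ ≤ t τ ∧ t τ ≤ K.tmax τ ∧ b ≤ t τ ∧ t τ ≤ d

/-- The chain `ẑ` produced by `Lift-Cycle(z, (s,f), w₀)` with the choice of times `t`
(here `b = min s f`, `d = max s f`): the sum of the vertical cells `⟨τ,z⟩·(τ×t_τ)` over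
simplices `τ` of `z` with `T(τ) ∩ [b,d] ≠ ∅`, plus horizontal cells `σ×[k,k+1]`
(oriented from `s` to `f`) whose coefficient is the running sum
`⟨σ,w₀⟩ + Σ ⟨τ,z⟩·⟨σ,∂τ⟩` over the cofaces `τ` whose time `t_τ` has already been passed
when traversing from `s` to `f`. -/
noncomputable def liftCycle (K : DeltaComplex F n) (z : K.Cell →₀ F) (s f : ℤ)
    (w0 : K.Cell →₀ F) (t : K.Cell → ℤ) : PCell K.Cell →₀ F :=
  (∑ τ ∈ z.support.filter (fun τ => K.tmin τ ≤ max s f ∧ min s f ≤ K.tmax τ),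
      Finsupp.single (PCell.vert τ (t τ)) (z τ))
  + ∑ σ : K.Cell, ∑ k ∈ Finset.Icc (min s f) (max s f - 1),
      Finsupp.single (PCell.horiz σ k)
        ((if s ≤ f then (1 : F) else -1) *
          (w0 σ +
            ∑ τ ∈ z.support.filter (fun τ =>
                (K.tmin τ ≤ max s f ∧ min s f ≤ K.tmax τ) ∧
                  (if s ≤ f then t τ ≤ k else k + 1 ≤ t τ)),
              z τ * (K.bdry τ) σ))

/-- Cells of the cone `K̄ = ω ∗ K`: base simplices, the cone vertex `ω`,
and cone simplices `σ̄ = ω ∗ σ`. -/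
inductive CCell (C : Type) where
  | base : C → CCell C
  | omega : CCell C
  | cone : C → CCell C
deriving DecidableEq

/-- Boundary of a single cell of the cone `K̄`:
`∂σ` for base simplices, `0` for `ω`, and `∂(ω∗σ) = σ − ω∗∂σ` (minus `ω` when `σ` is a
vertex) for cone simplices. -/
noncomputable def ccellBd (K : DeltaComplex F n) : CCell K.Cell → (CCell K.Cell →₀ F)
  | .base σ => (K.bdry σ).sum fun ρ a => Finsupp.single (CCell.base ρ) a
  | .omega => 0
  | .cone σ =>
      Finsupp.single (CCell.base σ) 1
        - (K.bdry σ).sum (fun ρ a => Finsupp.single (CCell.cone ρ) a)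
        - (if K.dim σ = 0 then Finsupp.single CCell.omega 1 else 0)

/-- The boundary of a chain of the cone `K̄`. -/
noncomputable def cbd (K : DeltaComplex F n) (c : CCell K.Cell →₀ F) : CCell K.Cell →₀ F :=
  c.sum fun x a => a • ccellBd K x

/-- The restriction `c ∩ K` of a cone chain to the base simplices, as a chain in `K`. -/
noncomputable def basePart (K : DeltaComplex F n) (c : CCell K.Cell →₀ F) : K.Cell →₀ F :=
  c.sum fun x a =>
    match x with
    | .base σ => Finsupp.single σ a
    | .omega => 0
    | .cone _ => 0

/-- The restriction `c ∩ (K̄ − K)` of a cone chain to the cells not in the base. -/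
noncomputable def conePart (K : DeltaComplex F n) (c : CCell K.Cell →₀ F) :
    CCell K.Cell →₀ F :=
  c.sum fun x a =>
    match x with
    | .base _ => 0
    | .omega => Finsupp.single CCell.omega a
    | .cone ρ => Finsupp.single (CCell.cone ρ) a

/-- The order of the cells of `K̄` in the cone filtration: base simplices by increasing
`min σ`, then `ω`, then cone simplices by decreasing `max σ`, ties broken consistently
so that every prefix is a subcomplex. -/
structure ConeOrder (K : DeltaComplex F n) where
  pos : CCell K.Cell → ℕ
  inj : Function.Injective pos
  base_lt_base : ∀ σ τ : K.Cell, K.tmin σ < K.tmin τ → pos (.base σ) < pos (.base τ)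
  base_lt_omega : ∀ σ : K.Cell, pos (.base σ) < pos .omega
  omega_lt_cone : ∀ σ : K.Cell, pos .omega < pos (.cone σ)
  cone_lt_cone : ∀ σ τ : K.Cell, K.tmax τ < K.tmax σ → pos (.cone σ) < pos (.cone τ)
  faces_first : ∀ x y, (ccellBd K x) y ≠ 0 → pos y < pos x

/-- `σ` is the pivot (lowest nonzero entry) of the column (chain) `c`. -/
def IsLow (K : DeltaComplex F n) (O : ConeOrder K) (c : CCell K.Cell →₀ F)
    (σ : CCell K.Cell) : Prop :=
  c σ ≠ 0 ∧ ∀ ρ, c ρ ≠ 0 → O.pos ρ ≤ O.pos σ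

/-- `R = DV` is a decomposition of the boundary matrix `D` of the cone filtration:
`V` is invertible upper-triangular and `R` is reduced (pivots of nonzero columns lie
in pairwise distinct rows). -/
structure IsReduction (K : DeltaComplex F n) (O : ConeOrder K)
    (R V : CCell K.Cell → (CCell K.Cell →₀ F)) : Prop where
  rdv : ∀ τ, R τ = cbd K (V τ)
  upper : ∀ τ ρ, (V τ) ρ ≠ 0 → O.pos ρ ≤ O.pos τ
  diag : ∀ τ, (V τ) τ ≠ 0
  reduced : ∀ τ τ' σ, τ ≠ τ' → IsLow K O (R τ) σ → ¬ IsLow K O (R τ') σ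

/-- One run of the lazy (standard left-to-right) reduction of the column of `τ`:
starting from a column `c` (with coefficient vector `v`), while the column is nonzero
and its pivot collides with the pivot of an earlier (already reduced) column, subtract
the appropriate scalar multiple of that column. -/
inductive LazyReduces (K : DeltaComplex F n) (O : ConeOrder K)
    (R V : CCell K.Cell → (CCell K.Cell →₀ F)) (τ : CCell K.Cell) :
    (CCell K.Cell →₀ F) → (CCell K.Cell →₀ F) →
      (CCell K.Cell →₀ F) → (CCell K.Cell →₀ F) → Prop
  | done (c v : CCell K.Cell →₀ F)
      (h : ∀ σ, IsLow K O c σ → ∀ τ', O.pos τ' < O.pos τ → ¬ IsLow K O (R τ') σ) :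
      LazyReduces K O R V τ c v c v
  | step (c v c' v' : CCell K.Cell →₀ F) (τ' σ : CCell K.Cell)
      (hlt : O.pos τ' < O.pos τ) (hc : IsLow K O c σ) (hr : IsLow K O (R τ') σ)
      (next : LazyReduces K O R V τ (c - (c σ / ((R τ') σ)) • R τ')
        (v - (c σ / ((R τ') σ)) • V τ') c' v') :
      LazyReduces K O R V τ c v c' v'

/-- `R = DV` is obtained by the lazy reduction: every column `R τ` (with coefficient
column `V τ`) is the result of the lazy reduction of the boundary column of `τ`,
columns being processed from left to right. -/
def IsLazyReduction (K : DeltaComplex F n) (O : ConeOrder K)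
    (R V : CCell K.Cell → (CCell K.Cell →₀ F)) : Prop :=
  ∀ τ, LazyReduces K O R V τ (ccellBd K τ) (Finsupp.single τ 1) (R τ) (V τ)

/-!
For a column `x` with pivot `l`, every base simplex `ρ` of `V[x]` satisfies
`max ρ > min μ` if `l = μ` is a base simplex, or `max ρ ≥ max μ` if `x = ω∗μ`.
The unit column of a base simplex `ν` satisfies the first bound, because the pivot of
`R[ν]` precedes `ν` and so has `min ≤ min ν < max ν`. A lazy step adds a multiple of an
earlier column `V[τ']` whose pivot lies no lower than the final pivot of `x`; the cone
filtration order then transfers the bound of `τ'` to `x`. For `x = τ̄` with pivot `σ`,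
either alternative gives `max ρ ≥ b`, since `min σ = d > b = max τ`.
-/

lemma ne_zero_or_ne_zero_of_sub_smul_ne_zero {α R : Type} [Ring R] {c d : α →₀ R} {k : R}
    {a : α} (h : (c - k • d) a ≠ 0) : c a ≠ 0 ∨ d a ≠ 0 := by
  by_contra! hcd
  simp [hcd] at h

lemma SuppOn.sub_smul {α R : Type} [Ring R] {c d : α →₀ R} {P : α → Prop} (hc : SuppOn c P)
    (hd : SuppOn d P) (k : R) : SuppOn (c - k • d) P :=
  fun a ha => (ne_zero_or_ne_zero_of_sub_smul_ne_zero ha).elim (hc a) (hd a)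

namespace ConeOrder

variable {K : DeltaComplex F n} (O : ConeOrder K)

lemma exists_base_of_pos_le_base {x : CCell K.Cell} {ν : K.Cell}
    (h : O.pos x ≤ O.pos (.base ν)) : ∃ μ, x = .base μ ∧ K.tmin μ ≤ K.tmin ν := by
  cases x with
  | base μ => exact ⟨μ, rfl, not_lt.mp fun hlt => (O.base_lt_base ν μ hlt).not_ge h⟩
  | omega => exact absurd h (O.base_lt_omega ν).not_ge
  | cone μ => exact absurd h ((O.base_lt_omega ν).trans (O.omega_lt_cone μ)).not_ge

lemma exists_cone_of_pos_cone_le {x : CCell K.Cell} {μ : K.Cell}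
    (h : O.pos (.cone μ) ≤ O.pos x) : ∃ ν, x = .cone ν ∧ K.tmax ν ≤ K.tmax μ := by
  cases x with
  | base ν => exact absurd h ((O.base_lt_omega ν).trans (O.omega_lt_cone μ)).not_ge
  | omega => exact absurd h (O.omega_lt_cone μ).not_ge
  | cone ν => exact ⟨ν, rfl, not_lt.mp fun hlt => (O.cone_lt_cone ν μ hlt).not_ge h⟩

end ConeOrder

namespace LazyReduces

variable {K : DeltaComplex F n} {O : ConeOrder K} {R V : CCell K.Cell → (CCell K.Cell →₀ F)}
  {x : CCell K.Cell} {c v c' v' : CCell K.Cell →₀ F}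

lemma suppOn_pos_le (h : LazyReduces K O R V x c v c' v') {p : ℕ}
    (hc : SuppOn c (fun ρ => O.pos ρ ≤ p)) : SuppOn c' (fun ρ => O.pos ρ ≤ p) := by
  induction h with
  | done => exact hc
  | step c _ _ _ _ σ _ hσ hr _ ih =>
    exact ih fun ρ hρ => (SuppOn.sub_smul hσ.2 hr.2 _ ρ hρ).trans (hc σ hσ.1)

lemma suppOn (h : LazyReduces K O R V x c v c' v') {l : CCell K.Cell} (hl : IsLow K O c' l)
    {P : CCell K.Cell → Prop} (hv : SuppOn v P)
    (hV : ∀ τ' σ, O.pos τ' < O.pos x → IsLow K O (R τ') σ → O.pos l ≤ O.pos σ →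
      SuppOn (V τ') P) :
    SuppOn v' P := by
  induction h with
  | done => exact hv
  | step c v _ _ τ' σ hlt hσ hr next ih =>
    have hlσ : O.pos l ≤ O.pos σ :=
      next.suppOn_pos_le (SuppOn.sub_smul hσ.2 hr.2 _) l hl.1
    exact ih hl (hv.sub_smul (hV τ' σ hlt hr hlσ) _)

end LazyReduces

def AboveLevel (K : DeltaComplex F n) (x l : CCell K.Cell) : CCell K.Cell → Prop
  | .base ρ => (∃ μ, l = .base μ ∧ K.tmin μ < K.tmax ρ) ∨
      (∃ μ, x = .cone μ ∧ K.tmax μ ≤ K.tmax ρ)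
  | _ => True

section Lazy

variable {K : DeltaComplex F n} {O : ConeOrder K} {R V : CCell K.Cell → (CCell K.Cell →₀ F)}

lemma AboveLevel.mono {x x' l l' y : CCell K.Cell} (hx : O.pos x' ≤ O.pos x)
    (hl : O.pos l ≤ O.pos l') (h : AboveLevel K x' l' y) : AboveLevel K x l y := by
  cases y with
  | base ρ =>
    rcases h with ⟨μ', rfl, hμ'⟩ | ⟨μ', rfl, hμ'⟩
    · obtain ⟨μ, rfl, hμ⟩ := O.exists_base_of_pos_le_base hl
      exact Or.inl ⟨μ, rfl, hμ.trans_lt hμ'⟩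
    · obtain ⟨μ, rfl, hμ⟩ := O.exists_cone_of_pos_cone_le hx
      exact Or.inr ⟨μ, rfl, hμ.trans hμ'⟩
  | omega | cone _ => trivial

lemma exists_isLow_base_of_isLazyReduction (hlazy : IsLazyReduction K O R V) {ν : K.Cell}
    {l : CCell K.Cell} (hl : IsLow K O (R (.base ν)) l) :
    ∃ μ, l = .base μ ∧ K.tmin μ < K.tmax ν := by
  have hpos : O.pos l ≤ O.pos (.base ν) :=
    (hlazy _).suppOn_pos_le (fun ρ hρ => (O.faces_first _ _ hρ).le) l hl.1
  obtain ⟨μ, rfl, hμ⟩ := O.exists_base_of_pos_le_base hpos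
  exact ⟨μ, rfl, hμ.trans_lt (K.tmin_lt_tmax ν)⟩

lemma aboveLevel_self (hlazy : IsLazyReduction K O R V) {x l : CCell K.Cell}
    (hl : IsLow K O (R x) l) : AboveLevel K x l x := by
  cases x with
  | base ν => exact Or.inl (exists_isLow_base_of_isLazyReduction hlazy hl)
  | omega | cone _ => trivial

theorem suppOn_aboveLevel_of_isLazyReduction (hlazy : IsLazyReduction K O R V)
    (x l : CCell K.Cell) (hl : IsLow K O (R x) l) : SuppOn (V x) (AboveLevel K x l) := by
  induction hpos : O.pos x using Nat.strong_induction_on generalizing x l with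
  | _ p ih =>
    refine (hlazy x).suppOn hl ?_ fun τ' σ hlt hσ hlσ y hy => ?_
    · intro y hy
      obtain ⟨rfl, -⟩ := Finsupp.single_apply_ne_zero.mp hy
      exact aboveLevel_self hlazy hl
    · exact (ih _ (hpos ▸ hlt) τ' σ hσ rfl y hy).mono hlt.le hlσ

end Lazy

theorem statement_17_general {F : Type} [Field F] {n : ℤ} (K : DeltaComplex F n) (O : ConeOrder K)
    (R V : CCell K.Cell → (CCell K.Cell →₀ F))
    (hlazy : IsLazyReduction K O R V)
    (σ τ : K.Cell) (b d : ℤ) (hd : K.tmin σ = d) (hb : K.tmax τ = b) (hbd : b < d)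
    (hlow : IsLow K O (R (CCell.cone τ)) (CCell.base σ)) :
    ∀ ρ : K.Cell, (V (CCell.cone τ)) (CCell.base ρ) ≠ 0 → b ≤ K.tmax ρ := by
  intro ρ hρ
  rcases suppOn_aboveLevel_of_isLazyReduction hlazy _ _ hlow _ hρ with
    ⟨_, ⟨⟩, _⟩ | ⟨_, ⟨⟩, _⟩ <;> omega

/-- Claim (lazy reduction keeps `V[τ̄] ∩ K` above `b`): assume `R = DV` is obtained by the
lazy reduction, and let `(σ,τ̄)` be a persistence pair pairing a base simplex `σ` with a
cone simplex `τ̄ = ω∗τ`, with `min σ = d > b = max τ` (`low R[τ̄] = σ`). Then every base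
simplex with nonzero coefficient in `V[τ̄]` lies in `K_{≥b}`. -/
theorem statement_17 {F : Type} [Field F] {n : ℤ} (K : DeltaComplex F n) (O : ConeOrder K)
    (R V : CCell K.Cell → (CCell K.Cell →₀ F)) (hRV : IsReduction K O R V)
    (hlazy : IsLazyReduction K O R V)
    (σ τ : K.Cell) (b d : ℤ) (hd : K.tmin σ = d) (hb : K.tmax τ = b) (hbd : b < d)
    (hlow : IsLow K O (R (CCell.cone τ)) (CCell.base σ)) :
    ∀ ρ : K.Cell, (V (CCell.cone τ)) (CCell.base ρ) ≠ 0 → b ≤ K.tmax ρ :=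
  statement_17_general K O R V hlazy σ τ b d hd hb hbd hlow
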